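/- Let W, U, V be finite types and μ a probability mass function on W × U × V, defining jointly distributed random variables (Z, X, Y). Then ∑_{(x,y) : Pr[X=x,Y=y] > 0} Pr[X = x, Y = y] · ‖(law of Z given X = x) − (law of Z given X = x, Y = y)‖² ≤ (ln 2 / 2) · I(Z;Y | X). -/

import Mathlib

open scoped BigOperators

open Classical in
/-- Probability of the event `p` under the mass function `μ`. -/
noncomputable def pr {Ω : Type*} [Fintype Ω] (μ : Ω → ℝ) (p : Ω → Prop) : ℝ :=
  ∑ ω, if p ω then μ ω else 0

/-- Conditional law of the random variable `f` given the event `p`. -/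
noncomputable def condLaw {Ω α : Type*} [Fintype Ω] (μ : Ω → ℝ) (f : Ω → α) (p : Ω → Prop)
    (a : α) : ℝ :=
  pr μ (fun ω => f ω = a ∧ p ω) / pr μ p

/-- Base-2 entropy of a mass function on a finite type. -/
noncomputable def entropyOf {α : Type*} [Fintype α] (q : α → ℝ) : ℝ :=
  -∑ a, q a * Real.logb 2 (q a)

/-- Conditional entropy `H(f | g)` of random variables `f`, `g` under `μ`. -/
noncomputable def condEntropy {Ω α β : Type*} [Fintype Ω] [Fintype α] [Fintype β]
    (μ : Ω → ℝ) (f : Ω → α) (g : Ω → β) : ℝ :=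
  ∑ b, pr μ (fun ω => g ω = b) * entropyOf (condLaw μ f (fun ω => g ω = b))

/-- Conditional mutual information `I(f ; g | h)` under `μ`. -/
noncomputable def condMutualInfo {Ω α β γ : Type*} [Fintype Ω] [Fintype α] [Fintype β]
    [Fintype γ] (μ : Ω → ℝ) (f : Ω → α) (g : Ω → β) (h : Ω → γ) : ℝ :=
  condEntropy μ f h + condEntropy μ g h - condEntropy μ (fun ω => (f ω, g ω)) h

/-- Total variation distance between two mass functions on a finite type. -/
noncomputable def tvDist {α : Type*} [Fintype α] (p q : α → ℝ) : ℝ :=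
  (1 / 2) * ∑ a, |p a - q a|

/-!
Given `X = x`, the conditional mutual information `I(Z;Y | X)` is the `Pr[X = x, Y = y]`-average of
the Kullback–Leibler divergence (in bits, whence the factor `ln 2`) of the law of `Z` given
`X = x, Y = y` from the law of `Z` given `X = x`. The theorem is therefore Pinsker's inequality
`‖P - Q‖² ≤ D(P ‖ Q) / 2` averaged over `(x, y)`. Pinsker's inequality in turn follows from the
pointwise bound `t log t + 1 - t ≥ 3 (t - 1)² / (2 t + 4)` and Cauchy–Schwarz with the weights
`(2 P + 4 Q) / 3`, which sum to `2`.
-/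

open Real InformationTheory

lemma hasDerivAt_klFun_sub_sq_div {t : ℝ} (ht : 0 < t) :
    HasDerivAt (fun t => klFun t - 3 * (t - 1) ^ 2 / (2 * t + 4))
      (log t - 6 * (t - 1) * (t + 5) / (2 * t + 4) ^ 2) t := by
  have hden : 2 * t + 4 ≠ 0 := by positivity
  have hquot : HasDerivAt (fun t : ℝ => 3 * (t - 1) ^ 2 / (2 * t + 4))
      ((3 * (2 * (t - 1) ^ 1 * 1) * (2 * t + 4) - 3 * (t - 1) ^ 2 * (2 * 1)) / (2 * t + 4) ^ 2)
      t :=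
    ((((hasDerivAt_id t).sub_const 1).pow 2).const_mul 3).div
      (((hasDerivAt_id t).const_mul 2).add_const 4) hden
  exact ((hasDerivAt_klFun ht.ne').sub hquot).congr_deriv (by ring)

lemma sub_one_mul_log_sub_div_nonneg {t : ℝ} (ht : 0 < t) :
    0 ≤ (t - 1) * (log t - 2 * (t - 1) / (t + 1)) := by
  rcases le_total 1 t with h1 | h1
  · have := le_log_one_add_of_nonneg (sub_nonneg.2 h1)
    rw [add_sub_cancel, show t - 1 + 2 = t + 1 by ring] at this
    exact mul_nonneg (sub_nonneg.2 h1) (sub_nonneg.2 this)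
  · have := le_log_one_add_of_nonneg (sub_nonneg.2 (one_le_inv₀ ht |>.2 h1))
    rw [add_sub_cancel, log_inv] at this
    refine mul_nonneg_of_nonpos_of_nonpos (sub_nonpos.2 h1) (sub_nonpos.2 ?_)
    have hinv : 2 * (t⁻¹ - 1) / (t⁻¹ - 1 + 2) = -(2 * (t - 1) / (t + 1)) := by
      field_simp
      ring
    linarith

lemma sub_one_mul_log_sub_mul_div_sq_nonneg {t : ℝ} (ht : 0 < t) :
    0 ≤ (t - 1) * (log t - 6 * (t - 1) * (t + 5) / (2 * t + 4) ^ 2) := by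
  have hgap : (t - 1) * (2 * (t - 1) / (t + 1) - 6 * (t - 1) * (t + 5) / (2 * t + 4) ^ 2)
      = 2 * (t - 1) ^ 4 / ((t + 1) * (2 * t + 4) ^ 2) := by
    field_simp
    ring
  have hgap_nonneg : 0 ≤ 2 * (t - 1) ^ 4 / ((t + 1) * (2 * t + 4) ^ 2) := by positivity
  have := sub_one_mul_log_sub_div_nonneg ht
  linarith

lemma three_mul_sq_sub_one_div_le_klFun {t : ℝ} (ht : 0 ≤ t) :
    3 * (t - 1) ^ 2 / (2 * t + 4) ≤ klFun t := by
  set g : ℝ → ℝ := fun t => klFun t - 3 * (t - 1) ^ 2 / (2 * t + 4)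
  set g' : ℝ → ℝ := fun t => log t - 6 * (t - 1) * (t + 5) / (2 * t + 4) ^ 2
  have hg_cont : ContinuousOn g (Set.Ici 0) := by
    refine continuous_klFun.continuousOn.sub (ContinuousOn.div (by fun_prop) (by fun_prop) ?_)
    intro x (hx : 0 ≤ x)
    positivity
  have hg_deriv : ∀ x, 0 < x → HasDerivAt g (g' x) x :=
    fun x hx => hasDerivAt_klFun_sub_sq_div hx
  have hg_one : g 1 = 0 := by simp [g, klFun_one]
  suffices 0 ≤ g t by simpa [g, sub_nonneg] using this
  rw [← hg_one]
  rcases le_total 1 t with h1 | h1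
  · have hmono : MonotoneOn g (Set.Ici 1) := by
      refine monotoneOn_of_hasDerivWithinAt_nonneg (f' := g') (convex_Ici 1)
        (hg_cont.mono (Set.Ici_subset_Ici.2 zero_le_one)) (fun x hx => ?_) (fun x hx => ?_)
      all_goals rw [interior_Ici] at hx
      · exact (hg_deriv x (one_pos.trans hx)).hasDerivWithinAt
      · exact nonneg_of_mul_nonneg_right
          (sub_one_mul_log_sub_mul_div_sq_nonneg (one_pos.trans hx)) (sub_pos.2 hx)
    exact hmono Set.self_mem_Ici h1 h1
  · have hanti : AntitoneOn g (Set.Icc 0 1) := by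
      refine antitoneOn_of_hasDerivWithinAt_nonpos (f' := g') (convex_Icc 0 1)
        (hg_cont.mono Set.Icc_subset_Ici_self) (fun x hx => ?_) (fun x hx => ?_)
      all_goals rw [interior_Icc] at hx
      · exact (hg_deriv x hx.1).hasDerivWithinAt
      · exact nonpos_of_mul_nonneg_right
          (sub_one_mul_log_sub_mul_div_sq_nonneg hx.1) (sub_neg.2 hx.2)
    exact hanti ⟨ht, h1⟩ ⟨zero_le_one, le_rfl⟩ h1

/-- In nats. Since `log (x / 0) = 0`, this is the divergence only when `P ≪ Q`. -/
noncomputable def klDivergence {α : Type*} [Fintype α] (P Q : α → ℝ) : ℝ :=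
  ∑ a, P a * log (P a / Q a)

lemma three_mul_sq_sub_div_le_mul_log_div {p q : ℝ} (hp : 0 ≤ p) (hq : 0 ≤ q)
    (hpq : q = 0 → p = 0) :
    3 * (p - q) ^ 2 / (2 * p + 4 * q) ≤ p * log (p / q) + q - p := by
  rcases hq.eq_or_lt with rfl | hq
  · simp [hpq rfl]
  calc 3 * (p - q) ^ 2 / (2 * p + 4 * q) = q * (3 * (p / q - 1) ^ 2 / (2 * (p / q) + 4)) := by
        field_simp
    _ ≤ q * klFun (p / q) :=
        mul_le_mul_of_nonneg_left (three_mul_sq_sub_one_div_le_klFun (div_nonneg hp hq.le)) hq.le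
    _ = p * log (p / q) + q - p := by
        rw [klFun_apply]
        field_simp

lemma tvDist_comm {α : Type*} [Fintype α] (P Q : α → ℝ) : tvDist P Q = tvDist Q P := by
  simp only [tvDist, abs_sub_comm]

theorem sq_tvDist_le_half_klDivergence {α : Type*} [Fintype α] {P Q : α → ℝ}
    (hP : ∀ a, 0 ≤ P a) (hQ : ∀ a, 0 ≤ Q a) (hP1 : ∑ a, P a = 1) (hQ1 : ∑ a, Q a = 1)
    (hPQ : ∀ a, Q a = 0 → P a = 0) :
    tvDist P Q ^ 2 ≤ klDivergence P Q / 2 := by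
  set w : α → ℝ := fun a => (2 * P a + 4 * Q a) / 3
  have hw : ∑ a, w a = 2 := by
    simp only [w, ← Finset.sum_div, Finset.sum_add_distrib, ← Finset.mul_sum, hP1, hQ1]
    norm_num
  have hw0 : ∀ a, 0 ≤ w a := fun a => by have := hP a; have := hQ a; positivity
  have hsum : ∑ a, (P a - Q a) ^ 2 / w a ≤ klDivergence P Q := by
    calc ∑ a, (P a - Q a) ^ 2 / w a
        ≤ ∑ a, (P a * log (P a / Q a) + Q a - P a) :=
          Finset.sum_le_sum fun a _ => by
            simpa [w, div_div_eq_mul_div, mul_comm] using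
              three_mul_sq_sub_div_le_mul_log_div (hP a) (hQ a) (hPQ a)
      _ = klDivergence P Q := by
          rw [Finset.sum_sub_distrib, Finset.sum_add_distrib, hP1, hQ1, klDivergence,
            add_sub_cancel_right]
  have hCS : (∑ a, |P a - Q a|) ^ 2 ≤ (∑ a, (P a - Q a) ^ 2 / w a) * ∑ a, w a := by
    refine Finset.sum_sq_le_sum_mul_sum_of_sq_le_mul _
      (fun a _ => div_nonneg (sq_nonneg _) (hw0 a)) (fun a _ => hw0 a) fun a _ => ?_
    rcases (hw0 a).eq_or_lt with hwa | hwa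
    · have hPQa : 2 * P a + 4 * Q a = 0 := by simp only [w] at hwa; linarith
      have hPa : P a = 0 := by linarith [hP a, hQ a]
      have hQa : Q a = 0 := by linarith [hP a, hQ a]
      simp [hPa, hQa]
    · rw [sq_abs, div_mul_cancel₀ _ hwa.ne']
  rw [hw] at hCS
  have htv : tvDist P Q = (∑ a, |P a - Q a|) / 2 := by rw [tvDist]; ring
  rw [htv, div_pow]
  linarith

section Probability

variable {Ω α β γ : Type*} [Fintype Ω] {μ : Ω → ℝ}

lemma pr_nonneg (h0 : ∀ ω, 0 ≤ μ ω) (p : Ω → Prop) : 0 ≤ pr μ p :=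
  Finset.sum_nonneg fun ω _ => by split_ifs <;> simp [h0 ω]

lemma pr_mono (h0 : ∀ ω, 0 ≤ μ ω) {p q : Ω → Prop} (hpq : ∀ ω, p ω → q ω) :
    pr μ p ≤ pr μ q :=
  Finset.sum_le_sum fun ω _ => by
    by_cases hp : p ω
    · simp [hp, hpq ω hp]
    · split_ifs <;> simp [h0 ω]

lemma le_pr (h0 : ∀ ω, 0 ≤ μ ω) {p : Ω → Prop} {ω : Ω} (hp : p ω) : μ ω ≤ pr μ p := by
  classical
  calc μ ω = if p ω then μ ω else 0 := by simp [hp]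
    _ ≤ pr μ p := by
      unfold pr
      convert Finset.single_le_sum (f := fun ω => if p ω then μ ω else 0)
        (fun ω _ => by split_ifs <;> simp [h0 ω]) (Finset.mem_univ ω)

lemma sum_pr_and [Fintype α] (f : Ω → α) (p : Ω → Prop) :
    ∑ a, pr μ (fun ω => f ω = a ∧ p ω) = pr μ p := by
  classical
  unfold pr
  rw [Finset.sum_comm]
  refine Finset.sum_congr rfl fun ω _ => ?_
  by_cases hp : p ω <;> simp [hp]

lemma sum_sum_pr_and_mul [Fintype α] [Fintype β] (f : Ω → α) (g : Ω → β) (φ : α → β → ℝ) :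
    ∑ b, ∑ a, pr μ (fun ω => f ω = a ∧ g ω = b) * φ a b = ∑ ω, μ ω * φ (f ω) (g ω) := by
  classical
  simp only [pr, Finset.sum_mul, ite_mul, zero_mul]
  rw [Finset.sum_comm]
  simp only [Finset.sum_comm (γ := α), ite_and]
  simp [Finset.sum_comm (γ := β)]

lemma condLaw_nonneg (h0 : ∀ ω, 0 ≤ μ ω) (f : Ω → α) (p : Ω → Prop) (a : α) :
    0 ≤ condLaw μ f p a :=
  div_nonneg (pr_nonneg h0 _) (pr_nonneg h0 _)

lemma sum_condLaw [Fintype α] (f : Ω → α) {p : Ω → Prop} (hp : pr μ p ≠ 0) :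
    ∑ a, condLaw μ f p a = 1 := by
  simp only [condLaw, ← Finset.sum_div, sum_pr_and, div_self hp]

lemma pr_mul_condLaw (h0 : ∀ ω, 0 ≤ μ ω) (f : Ω → α) (p : Ω → Prop) (a : α) :
    pr μ p * condLaw μ f p a = pr μ (fun ω => f ω = a ∧ p ω) := by
  rcases (pr_nonneg h0 p).eq_or_lt with hp | hp
  · have hfp := pr_mono h0 (p := fun ω => f ω = a ∧ p ω) fun ω h => h.2
    rw [← hp, zero_mul]
    exact (le_antisymm (hp ▸ hfp) (pr_nonneg h0 _)).symm
  · exact mul_div_cancel₀ _ hp.ne'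

lemma condLaw_eq_zero_of_imp (h0 : ∀ ω, 0 ≤ μ ω) (f : Ω → α) {p q : Ω → Prop}
    (hpq : ∀ ω, p ω → q ω) {a : α} (ha : condLaw μ f q a = 0) : condLaw μ f p a = 0 := by
  have hfq : pr μ (fun ω => f ω = a ∧ q ω) = 0 := by
    rw [← pr_mul_condLaw h0, ha, mul_zero]
  have hfp : pr μ (fun ω => f ω = a ∧ p ω) = 0 :=
    le_antisymm (hfq ▸ pr_mono h0 fun ω h => ⟨h.1, hpq ω h.2⟩) (pr_nonneg h0 _)
  rw [condLaw, hfp, zero_div]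

lemma condLaw_pos (h0 : ∀ ω, 0 ≤ μ ω) (f : Ω → α) {p : Ω → Prop} {ω : Ω} (hω : 0 < μ ω)
    (hp : p ω) : 0 < condLaw μ f p (f ω) :=
  div_pos (hω.trans_le (le_pr h0 ⟨rfl, hp⟩)) (hω.trans_le (le_pr h0 hp))

lemma condLaw_prodMk (h0 : ∀ ω, 0 ≤ μ ω) (f : Ω → α) (g : Ω → β) (p : Ω → Prop)
    (a : α) (b : β) :
    condLaw μ (fun ω => (f ω, g ω)) p (a, b)
      = condLaw μ g p b * condLaw μ f (fun ω => p ω ∧ g ω = b) a := by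
  have hgp : (fun ω => g ω = b ∧ p ω) = fun ω => p ω ∧ g ω = b := by
    ext ω
    exact and_comm
  rw [condLaw.eq_1 μ g, div_mul_eq_mul_div, hgp, pr_mul_condLaw h0, condLaw]
  congr 2
  ext ω
  simp only [Prod.mk.injEq]
  tauto

lemma sum_pr_mul_sum_condLaw [Fintype α] [Fintype β] (h0 : ∀ ω, 0 ≤ μ ω) (f : Ω → α)
    (g : Ω → β) (φ : α → β → ℝ) :
    ∑ b, pr μ (fun ω => g ω = b) * ∑ a, condLaw μ f (fun ω => g ω = b) a * φ a b
      = ∑ ω, μ ω * φ (f ω) (g ω) := by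
  simp only [Finset.mul_sum, ← mul_assoc, pr_mul_condLaw h0]
  exact sum_sum_pr_and_mul f g φ

lemma condEntropy_eq_sum [Fintype α] [Fintype β] (h0 : ∀ ω, 0 ≤ μ ω) (f : Ω → α)
    (g : Ω → β) :
    condEntropy μ f g = -∑ ω, μ ω * logb 2 (condLaw μ f (fun ω' => g ω' = g ω) (f ω)) := by
  rw [← sum_pr_mul_sum_condLaw h0 f g fun a b => logb 2 (condLaw μ f (fun ω => g ω = b) a)]
  simp only [condEntropy, entropyOf, mul_neg, Finset.sum_neg_distrib]

lemma condMutualInfo_mul_log_two [Fintype α] [Fintype β] [Fintype γ] (h0 : ∀ ω, 0 ≤ μ ω)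
    (f : Ω → α) (g : Ω → β) (h : Ω → γ) :
    condMutualInfo μ f g h * log 2
      = ∑ c : γ × β, pr μ (fun ω => (h ω, g ω) = c) *
          klDivergence (condLaw μ f (fun ω => (h ω, g ω) = c))
            (condLaw μ f (fun ω => h ω = c.1)) := by
  set A : Ω → ℝ := fun ω => condLaw μ f (fun ω' => h ω' = h ω) (f ω)
  set B : Ω → ℝ := fun ω => condLaw μ g (fun ω' => h ω' = h ω) (g ω)
  set C : Ω → ℝ :=
    fun ω => condLaw μ (fun ω => (f ω, g ω)) (fun ω' => h ω' = h ω) (f ω, g ω)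
  set D : Ω → ℝ := fun ω => condLaw μ f (fun ω' => (h ω', g ω') = (h ω, g ω)) (f ω)
  have hchain : ∀ ω, C ω = B ω * D ω := fun ω => by
    simp only [B, C, D, condLaw_prodMk h0, Prod.mk.injEq]
  have hpoint : ∀ ω, μ ω * log (D ω / A ω)
      = (μ ω * logb 2 (C ω) - μ ω * logb 2 (A ω) - μ ω * logb 2 (B ω)) * log 2 := fun ω => by
    rcases (h0 ω).eq_or_lt with hω | hω
    · simp [← hω]
    have hA : 0 < A ω := condLaw_pos h0 f hω rfl
    have hB : 0 < B ω := condLaw_pos h0 g hω rfl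
    have hD : 0 < D ω := condLaw_pos h0 f hω rfl
    rw [hchain, logb, logb, logb, log_mul hB.ne' hD.ne', log_div hD.ne' hA.ne']
    field_simp
    ring
  have hkl : ∑ c : γ × β, pr μ (fun ω => (h ω, g ω) = c) *
        klDivergence (condLaw μ f (fun ω => (h ω, g ω) = c))
          (condLaw μ f (fun ω => h ω = c.1))
      = ∑ ω, μ ω * log (D ω / A ω) :=
    sum_pr_mul_sum_condLaw h0 f (fun ω => (h ω, g ω))
      fun a c => log (condLaw μ f (fun ω => (h ω, g ω) = c) a /
        condLaw μ f (fun ω => h ω = c.1) a)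
  rw [hkl, Finset.sum_congr rfl fun ω _ => hpoint ω, ← Finset.sum_mul, Finset.sum_sub_distrib,
    Finset.sum_sub_distrib, condMutualInfo, condEntropy_eq_sum h0, condEntropy_eq_sum h0,
    condEntropy_eq_sum h0]
  ring

end Probability

theorem expected_sq_tv_le_condMutualInfo_general {W U V : Type*} [Fintype W] [Fintype U] [Fintype V]
    (μ : W × U × V → ℝ) (h0 : ∀ ω, 0 ≤ μ ω) :
    ∑ p ∈ Finset.univ.filter (fun p : U × V => 0 < pr μ (fun ω => ω.2 = p)),
        pr μ (fun ω => ω.2 = p) *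
          (tvDist (condLaw μ (fun ω => ω.1) (fun ω => ω.2.1 = p.1))
            (condLaw μ (fun ω => ω.1) (fun ω => ω.2 = p))) ^ 2
      ≤ (Real.log 2 / 2) *
          condMutualInfo μ (fun ω => ω.1) (fun ω => ω.2.2) (fun ω => ω.2.1) := by
  set P : U × V → W → ℝ := fun p => condLaw μ (fun ω => ω.1) (fun ω => ω.2 = p)
  set Q : U × V → W → ℝ := fun p => condLaw μ (fun ω => ω.1) (fun ω => ω.2.1 = p.1)
  have hpinsker : ∀ p, 0 < pr μ (fun ω => ω.2 = p) →
      tvDist (Q p) (P p) ^ 2 ≤ klDivergence (P p) (Q p) / 2 := fun p hp => by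
    have hQ : pr μ (fun ω => ω.2.1 = p.1) ≠ 0 :=
      (hp.trans_le (pr_mono h0 fun ω h => by rw [h])).ne'
    rw [tvDist_comm]
    exact sq_tvDist_le_half_klDivergence (condLaw_nonneg h0 _ _) (condLaw_nonneg h0 _ _)
      (sum_condLaw _ hp.ne') (sum_condLaw _ hQ)
      fun z => condLaw_eq_zero_of_imp h0 _ fun ω h => by rw [h]
  calc _ ≤ ∑ p ∈ Finset.univ.filter (fun p : U × V => 0 < pr μ (fun ω => ω.2 = p)),
          pr μ (fun ω => ω.2 = p) * (klDivergence (P p) (Q p) / 2) :=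
        Finset.sum_le_sum fun p hp =>
          mul_le_mul_of_nonneg_left (hpinsker p (Finset.mem_filter.1 hp).2) (pr_nonneg h0 _)
    _ ≤ ∑ p, pr μ (fun ω => ω.2 = p) * (klDivergence (P p) (Q p) / 2) := by
        refine Finset.sum_le_sum_of_subset_of_nonneg (Finset.filter_subset _ _) fun p _ hp => ?_
        rw [Finset.mem_filter, not_and, not_lt] at hp
        rw [le_antisymm (hp (Finset.mem_univ p)) (pr_nonneg h0 _), zero_mul]
    _ = Real.log 2 / 2 * condMutualInfo μ (fun ω => ω.1) (fun ω => ω.2.2) (fun ω => ω.2.1) := by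
        rw [div_mul_eq_mul_div, mul_comm (Real.log 2),
          condMutualInfo_mul_log_two h0 (fun ω => ω.1) (fun ω => ω.2.2) (fun ω => ω.2.1),
          Finset.sum_div]
        exact Finset.sum_congr rfl fun p _ => (mul_div_assoc _ _ _).symm

/-- For jointly distributed `(Z, X, Y)`, the expected squared total variation distance
between the law of `Z` given `X = x` and the law of `Z` given `X = x, Y = y` is at most
`(ln 2 / 2) · I(Z ; Y | X)`. -/
theorem expected_sq_tv_le_condMutualInfo {W U V : Type*} [Fintype W] [Fintype U] [Fintype V]
    (μ : W × U × V → ℝ) (h0 : ∀ ω, 0 ≤ μ ω) (h1 : ∑ ω, μ ω = 1) :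
    ∑ p ∈ Finset.univ.filter (fun p : U × V => 0 < pr μ (fun ω => ω.2 = p)),
        pr μ (fun ω => ω.2 = p) *
          (tvDist (condLaw μ (fun ω => ω.1) (fun ω => ω.2.1 = p.1))
            (condLaw μ (fun ω => ω.1) (fun ω => ω.2 = p))) ^ 2
      ≤ (Real.log 2 / 2) *
          condMutualInfo μ (fun ω => ω.1) (fun ω => ω.2.2) (fun ω => ω.2.1) :=
  expected_sq_tv_le_condMutualInfo_general μ h0
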